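/- arXiv:1910.14369 — 6 statements merged into one kernel-verified Lean document; each statement's English description precedes it below -/
import Mathlib

section
/- Σ_{n≥0} (−1)^{⌈n/2⌉} (o_P(n) − e_P(n)) q^n = 1/((q; −q²)_∞ (−q²; −q²)_∞), where o_P(n) (resp. e_P(n)) is the number of partitions λ of n whose index ind_n(λ) is odd (resp. even), and the parity of ind_n(λ) equals the parity of (op(λ) + (n mod 2))/2 − 1. -/
/-!
Give a part `k` the sign `(-1)^⌊k/2⌋`. A parity computation shows that `(-1)^⌈m/2⌉` times the
sign `±1` recording whether the index of `λ ⊢ m` is odd or even is the product of the signs of the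
parts of `λ`. So the left-hand side is the signed partition generating function
`∏_k 1/(1 - (-1)^⌊k/2⌋ q^k)`, whose factors for `k = 2j+1, 2j+2` are `1 - (-1)^j q^{2j+1}` and
`1 + (-1)^j q^{2j+2}`; factors with `k > n` are `1` modulo `q^{n+1}`.
-/

open Finset

/-- The number of odd parts of a partition. -/
def Nat.Partition.op {n : ℕ} (p : n.Partition) : ℕ :=
  (p.parts.filter (fun x => Odd x)).card

/-- A representative of the parity of the index `ind_n(λ)` of a partition `λ` of `n`:
`ind(λ) ≡ (op(λ) + op((n)))/2 - 1 (mod 2)` where `op((n)) = n % 2`. -/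
def pind (n : ℕ) (p : n.Partition) : ℤ := ((p.op : ℤ) + ((n % 2 : ℕ) : ℤ)) / 2 - 1

/-- The number of partitions of `n` lying in `S` with odd index. -/
def oCount (S : Set (Multiset ℕ)) [DecidablePred (· ∈ S)] (n : ℕ) : ℕ :=
  (univ.filter (fun p : n.Partition => p.parts ∈ S ∧ Odd (pind n p))).card

/-- The number of partitions of `n` lying in `S` with even index. -/
def eCount (S : Set (Multiset ℕ)) [DecidablePred (· ∈ S)] (n : ℕ) : ℕ :=
  (univ.filter (fun p : n.Partition => p.parts ∈ S ∧ Even (pind n p))).card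

/-- The set of all partitions (as multisets of parts). -/
def allParts : Set (Multiset ℕ) := Set.univ

instance : DecidablePred (· ∈ allParts) := fun _ => Decidable.isTrue trivial


open PowerSeries
open scoped PowerSeries.WithPiTopology

theorem Finset.prod_range_two_mul {M : Type*} [CommMonoid M] (f : ℕ → M) (n : ℕ) :
    ∏ i ∈ range (2 * n), f i = ∏ j ∈ range n, f (2 * j) * f (2 * j + 1) := by
  induction n with
  | zero => simp
  | succ n ih =>
    rw [mul_add, mul_one, prod_range_succ, prod_range_succ, prod_range_succ, ih, mul_assoc]

theorem Finset.dvd_prod_sub_one {R ι : Type*} [CommRing R] (s : Finset ι) {a : R} {f : ι → R}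
    (hf : ∀ i ∈ s, a ∣ f i - 1) : a ∣ ∏ i ∈ s, f i - 1 :=
  prod_induction f (fun x => a ∣ x - 1)
    (fun x y hx hy => by
      simpa [mul_sub, sub_add_sub_cancel] using dvd_add (dvd_mul_of_dvd_right hy x) hx)
    (by simp) hf

theorem Multiset.toFinsupp_prod_pow {α M : Type*} [DecidableEq α] [CommMonoid M]
    (s : Multiset α) (w : α → M) :
    s.toFinsupp.prod (fun i c => w i ^ c) = (s.map w).prod := by
  rw [Finset.prod_multiset_map_count, Finsupp.prod, toFinsupp_support]
  simp only [toFinsupp_apply]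

theorem Multiset.sum_eq_two_mul_sum_div_two_add_card_filter_odd (s : Multiset ℕ) :
    s.sum = 2 * (s.map (· / 2)).sum + (s.filter Odd).card := by
  induction s using Multiset.induction_on with
  | empty => simp
  | cons a s ih =>
    by_cases ha : Odd a
    · simp only [sum_cons, map_cons, filter_cons_of_pos _ ha, card_cons]
      have := Nat.odd_iff.mp ha
      omega
    · simp only [sum_cons, map_cons, filter_cons_of_neg _ ha]
      have := Nat.not_odd_iff.mp ha
      omega

namespace PowerSeries

variable {R : Type*} [CommRing R]

theorem coeff_eq_of_X_pow_dvd_sub {n : ℕ} {f g : R⟦X⟧} (h : X ^ (n + 1) ∣ f - g) :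
    coeff n f = coeff n g :=
  sub_eq_zero.mp <| by simpa using X_pow_dvd_iff.mp h n n.lt_succ_self

theorem X_pow_dvd_tsum_pow_sub_one [TopologicalSpace R] [IsTopologicalRing R] [T2Space R]
    {f : R⟦X⟧} (hf₀ : constantCoeff f = 0) {d : ℕ} (hf : X ^ d ∣ f) :
    X ^ d ∣ ∑' j, f ^ j - 1 := by
  have : ∑' j, f ^ j - 1 = (∑' j, f ^ j) * f := by
    linear_combination WithPiTopology.tsum_pow_mul_one_sub_of_constantCoeff_eq_zero hf₀
  exact this ▸ hf.mul_left _

/-- Over a discrete ring each coefficient of an infinite product is already that of a finite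
partial product. -/
theorem X_pow_dvd_sub_prod_of_hasProd [TopologicalSpace R] [DiscreteTopology R] {F : ℕ → R⟦X⟧}
    {G : R⟦X⟧} (hG : HasProd F G) {d : ℕ} (t : Finset ℕ) (hF : ∀ i ∉ t, X ^ d ∣ F i - 1) :
    X ^ d ∣ G - ∏ i ∈ t, F i := by
  refine X_pow_dvd_iff.mpr fun m hm => ?_
  have hlim := ((WithPiTopology.continuous_coeff R m).tendsto G).comp hG
  rw [nhds_discrete, Filter.tendsto_pure, SummationFilter.unconditional_filter,
    Filter.eventually_atTop] at hlim
  obtain ⟨s₀, hs₀⟩ := hlim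
  have htail : X ^ d ∣ ∏ i ∈ (s₀ ∪ t) \ t, F i - 1 :=
    dvd_prod_sub_one _ fun i hi => hF i (mem_sdiff.mp hi).2
  have hsplit : ∏ i ∈ s₀ ∪ t, F i - ∏ i ∈ t, F i =
      (∏ i ∈ (s₀ ∪ t) \ t, F i - 1) * ∏ i ∈ t, F i := by
    rw [sub_mul, one_mul, prod_sdiff subset_union_right]
  rw [map_sub, ← hs₀ (s₀ ∪ t) subset_union_left, Function.comp_apply, ← map_sub, hsplit]
  exact X_pow_dvd_iff.mp (dvd_mul_of_dvd_left htail _) m hm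

end PowerSeries

namespace Nat.Partition

variable {R : Type*} [CommRing R] [TopologicalSpace R]

theorem hasProd_genFun_pow [IsTopologicalRing R] [T2Space R] (w : ℕ → R) :
    HasProd (fun i => ∑' j, (C (w (i + 1)) * X ^ (i + 1)) ^ j) (genFun fun i c => w i ^ c) := by
  convert! hasProd_genFun (fun i c => w i ^ c) using 1
  ext1 i
  have hsum := WithPiTopology.summable_pow_of_constantCoeff_eq_zero
    (f := C (w (i + 1)) * X ^ (i + 1)) (by simp)
  rw [tsum_eq_zero_add' ((summable_nat_add_iff 1).mpr hsum)]
  simp [mul_pow, pow_mul, smul_eq_C_mul]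

theorem X_pow_dvd_genFun_pow_mul_prod_sub_one [DiscreteTopology R] (w : ℕ → R) {n N : ℕ}
    (hnN : n ≤ N) :
    X ^ (n + 1) ∣
      genFun (fun i c => w i ^ c) * ∏ i ∈ range N, (1 - C (w (i + 1)) * X ^ (i + 1)) - 1 := by
  have hf₀ (i : ℕ) : constantCoeff (C (w (i + 1)) * X ^ (i + 1)) = 0 := by simp
  have htrunc := X_pow_dvd_sub_prod_of_hasProd (hasProd_genFun_pow w) (d := n + 1) (range N)
    fun i hi => X_pow_dvd_tsum_pow_sub_one (hf₀ i) <|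
      (pow_dvd_pow X (by simp only [mem_range] at hi; omega)).mul_left _
  have hinv : (∏ i ∈ range N, ∑' j, (C (w (i + 1)) * X ^ (i + 1)) ^ j) *
      ∏ i ∈ range N, (1 - C (w (i + 1)) * X ^ (i + 1)) = 1 := by
    rw [← prod_mul_distrib]
    exact prod_eq_one fun i _ =>
      WithPiTopology.tsum_pow_mul_one_sub_of_constantCoeff_eq_zero (hf₀ i)
  convert htrunc.mul_right (∏ i ∈ range N, (1 - C (w (i + 1)) * X ^ (i + 1))) using 1
  rw [sub_mul, hinv]

end Nat.Partition

def partSign (k : ℕ) : ℤ := (-1) ^ (k / 2)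

theorem prod_map_partSign (s : Multiset ℕ) :
    (s.map partSign).prod = (-1) ^ (s.map (· / 2)).sum := by
  induction s using Multiset.induction_on with
  | empty => simp
  | cons a s ih => simp [partSign, ih, pow_add]

/-- With `T = Σ ⌊λᵢ/2⌋` we have `m = 2T + op(λ)`, so `⌈m/2⌉ = T + ⌈op(λ)/2⌉` while
`pind m λ = ⌈op(λ)/2⌉ - 1`. -/
theorem Nat.Partition.neg_one_pow_mul_sign_pind {m : ℕ} (p : m.Partition) :
    (-1) ^ ((m + 1) / 2) * (if Odd (pind m p) then 1 else -1) = (p.parts.map partSign).prod := by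
  have hm : m = 2 * (p.parts.map (· / 2)).sum + p.op := by
    rw [op, ← Multiset.sum_eq_two_mul_sum_div_two_add_card_filter_odd, p.parts_sum]
  obtain ⟨c, hc, hpind⟩ : ∃ c : ℕ, (m + 1) / 2 = (p.parts.map (· / 2)).sum + c ∧
      pind m p = c - 1 :=
    ⟨(p.op + m % 2) / 2, by omega, by rw [pind]; omega⟩
  rw [prod_map_partSign, hc, hpind, pow_add, mul_assoc]
  rcases Nat.even_or_odd c with hc | hc <;> simp [hc.neg_one_pow, hc]

theorem oCount_sub_eCount_allParts (m : ℕ) :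
    (oCount allParts m : ℤ) - eCount allParts m =
      ∑ p : m.Partition, if Odd (pind m p) then 1 else -1 := by
  simp [oCount, eCount, allParts, sum_ite, Int.not_odd_iff_even, sub_eq_add_neg]

theorem mk_neg_one_pow_mul_oCount_sub_eCount :
    PowerSeries.mk (fun m => (-1 : ℤ) ^ ((m + 1) / 2) *
        ((oCount allParts m : ℤ) - (eCount allParts m : ℤ))) =
      Nat.Partition.genFun fun i c => partSign i ^ c := by
  ext m
  simp only [coeff_mk, Nat.Partition.coeff_genFun, oCount_sub_eCount_allParts, mul_sum,
    Nat.Partition.neg_one_pow_mul_sign_pind, Multiset.toFinsupp_prod_pow]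

theorem prod_range_pair_factors_eq (n : ℕ) :
    ∏ j ∈ range n,
        ((1 - (-1 : ℤ⟦X⟧) ^ j * X ^ (2 * j + 1)) * (1 + (-1 : ℤ⟦X⟧) ^ j * X ^ (2 * j + 2))) =
      ∏ i ∈ range (2 * n), (1 - C (partSign (i + 1)) * X ^ (i + 1)) := by
  rw [prod_range_two_mul]
  refine prod_congr rfl fun j _ => ?_
  have hodd : (2 * j + 1) / 2 = j := by omega
  have heven : (2 * j + 1 + 1) / 2 = j + 1 := by omega
  simp [partSign, hodd, heven, pow_succ]

/-- `Σ_n (-1)^{⌈n/2⌉}(o_P(n) - e_P(n)) q^n = 1/((q;-q²)_∞(-q²;-q²)_∞)`: for each `n`, the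
coefficient of `q^n` in the left-hand side multiplied by
`Π_{j≤n} (1 - (-1)^j q^{2j+1})(1 + (-1)^j q^{2j+2})` is `1` if `n = 0` and `0` otherwise. -/
theorem parity_gf_all :
    ∀ n : ℕ, PowerSeries.coeff n
      ((PowerSeries.mk fun m =>
          (-1 : ℤ) ^ ((m + 1) / 2) * ((oCount allParts m : ℤ) - (eCount allParts m : ℤ))) *
        ∏ j ∈ range (n + 1),
          ((1 - (-1 : PowerSeries ℤ) ^ j * PowerSeries.X ^ (2 * j + 1)) *
            (1 + (-1 : PowerSeries ℤ) ^ j * PowerSeries.X ^ (2 * j + 2))))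
      = if n = 0 then 1 else 0 := by
  intro n
  rw [mk_neg_one_pow_mul_oCount_sub_eCount, prod_range_pair_factors_eq, ← coeff_one]
  exact coeff_eq_of_X_pow_dvd_sub
    (Nat.Partition.X_pow_dvd_genFun_pow_mul_prod_sub_one partSign (by omega))
end

section
/- Σ_{n≥0} (−1)^{⌈n/2⌉} (o_D(n) − e_D(n)) q^n = (−q; −q²)_∞ (q²; −q²)_∞, where D is the set of partitions into distinct parts and o_D(n) (resp. e_D(n)) counts λ ∈ D with λ ⊢ n whose index parity — the parity of (op(λ) + (n mod 2))/2 − 1 — is odd (resp. even). -/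
open Finset

/-- The set of partitions into distinct parts. -/
def distinctParts : Set (Multiset ℕ) := {s | s.Nodup}

instance : DecidablePred (· ∈ distinctParts) := fun s => by
  unfold distinctParts; exact inferInstanceAs (Decidable s.Nodup)

/-! Expanding the product, the coefficient of `q^n` in `∏_{k ≥ 1} (1 + (-1)^⌊k/2⌋ q^k)` is the sum,
over partitions `λ` of `n` into distinct parts, of `(-1)^(Σ ⌊λᵢ/2⌋)`. Since
`2 Σ ⌊λᵢ/2⌋ + op(λ) = n`, this sign is `(-1)^⌈n/2⌉` times `+1` or `-1` according as the index
of `λ` is odd or even. -/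

open PowerSeries

namespace PowerSeries

theorem coeff_prod_one_add_C_mul_X_pow {R : Type*} [CommSemiring R] (c : ℕ → R)
    (A : Finset ℕ) (n : ℕ) :
    coeff n (∏ k ∈ A, (1 + C (c k) * X ^ k)) =
      ∑ S ∈ A.powerset with ∑ k ∈ S, k = n, ∏ k ∈ S, c k := by
  simp_rw [add_comm (1 : R⟦X⟧), prod_add, prod_const_one, mul_one, prod_mul_distrib,
    prod_pow_eq_pow_sum _ (fun k => k), ← map_prod, map_sum, coeff_C_mul_X_pow, sum_filter,
    eq_comm]

theorem prod_range_pairs_eq_prod_Icc {R : Type*} [CommRing R] (m : ℕ) :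
    ∏ j ∈ range m,
        ((1 + (-1 : R⟦X⟧) ^ j * X ^ (2 * j + 1)) * (1 - (-1 : R⟦X⟧) ^ j * X ^ (2 * j + 2)))
      = ∏ k ∈ Icc 1 (2 * m), (1 + C ((-1 : R) ^ (k / 2)) * X ^ k) := by
  induction m with
  | zero => simp
  | succ m ih =>
    rw [prod_range_succ, ih, mul_add_one, prod_Icc_succ_top (by omega),
      prod_Icc_succ_top (by omega), mul_assoc, show (2 * m + 1) / 2 = m by omega,
      show (2 * m + 1 + 1) / 2 = m + 1 by omega]
    simp only [map_pow, map_neg, map_one]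
    ring

end PowerSeries

theorem Multiset.two_mul_sum_map_div_two_add_card_filter_odd (s : Multiset ℕ) :
    2 * (s.map (· / 2)).sum + (s.filter Odd).card = s.sum := by
  induction s using Multiset.induction_on with
  | empty => simp
  | cons a s ih =>
    rcases Nat.even_or_odd a with ha | ha
    · simp only [map_cons, sum_cons, filter_cons_of_neg s (Nat.not_odd_iff_even.2 ha)]
      grind
    · simp only [map_cons, sum_cons, filter_cons_of_pos s ha, card_cons]
      grind

namespace Nat.Partition

theorem two_mul_sum_map_div_two_add_op {n : ℕ} (p : n.Partition) :
    2 * (p.parts.map (· / 2)).sum + p.op = n :=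
  (Multiset.two_mul_sum_map_div_two_add_card_filter_odd p.parts).trans p.parts_sum

theorem toFinset_val_parts {n : ℕ} {p : n.Partition} (hp : p ∈ distincts n) :
    p.parts.toFinset.val = p.parts :=
  Multiset.dedup_eq_self.2 (mem_filter.1 hp).2

theorem sum_filter_powerset_Icc_eq_sum_distincts {M : Type*} [AddCommMonoid M] {m n : ℕ}
    (hnm : n ≤ m) (g : Finset ℕ → M) :
    ∑ S ∈ (Icc 1 m).powerset with ∑ k ∈ S, k = n, g S = ∑ p ∈ distincts n, g p.parts.toFinset := by
  refine sum_bij' (fun S hS => ⟨S.val, fun hi => ?_, ?_⟩) (fun p _ => p.parts.toFinset)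
    ?_ ?_ ?_ ?_ ?_
  · exact (mem_Icc.1 (mem_powerset.1 (mem_filter.1 hS).1 hi)).1
  · exact (sum_val S).trans (by simpa using (mem_filter.1 hS).2)
  · exact fun S _ => mem_filter.2 ⟨mem_univ _, S.nodup⟩
  · intro p hp
    refine mem_filter.2 ⟨mem_powerset.2 fun k hk => ?_, ?_⟩
    · have hk' := Multiset.mem_toFinset.1 hk
      exact mem_Icc.2 ⟨p.parts_pos hk', (le_of_mem_parts hk').trans hnm⟩
    · rw [sum_eq_multiset_sum, toFinset_val_parts hp, Multiset.map_id', p.parts_sum]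
  · exact fun S _ => val_toFinset S
  · exact fun p hp => Nat.Partition.ext (toFinset_val_parts hp)
  · exact fun S _ => congrArg g (val_toFinset S).symm

theorem prod_neg_one_pow_div_two_eq {R : Type*} [CommMonoid R] [HasDistribNeg R] {n : ℕ}
    {p : n.Partition} (hp : p ∈ distincts n) :
    ∏ k ∈ p.parts.toFinset, (-1 : R) ^ (k / 2)
      = (-1) ^ ((n + 1) / 2) * (-1) ^ ((p.op + n % 2) / 2) := by
  have hexp : (n + 1) / 2 + (p.op + n % 2) / 2
      = ∑ k ∈ p.parts.toFinset, k / 2 + 2 * ((p.op + n % 2) / 2) := by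
    have := p.two_mul_sum_map_div_two_add_op
    rw [sum_eq_multiset_sum, toFinset_val_parts hp]
    omega
  rw [prod_pow_eq_pow_sum, ← pow_add, hexp, pow_add, pow_mul, neg_one_sq, one_pow, mul_one]

end Nat.Partition

theorem odd_pind_iff {n : ℕ} (p : n.Partition) :
    Odd (pind n p) ↔ Even ((p.op + n % 2) / 2) := by
  rw [pind, Int.odd_iff, Nat.even_iff]
  omega

theorem ite_odd_pind_eq_neg_one_pow {n : ℕ} (p : n.Partition) :
    (if Odd (pind n p) then (1 : ℤ) else -1) = (-1) ^ ((p.op + n % 2) / 2) := by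
  rcases Nat.even_or_odd ((p.op + n % 2) / 2) with h | h
  · simp [odd_pind_iff, h, h.neg_one_pow]
  · simp [odd_pind_iff, Nat.not_even_iff_odd.2 h, h.neg_one_pow]

theorem oCount_sub_eCount_distinctParts (n : ℕ) :
    (oCount distinctParts n : ℤ) - eCount distinctParts n
      = ∑ p ∈ Nat.Partition.distincts n, (-1 : ℤ) ^ ((p.op + n % 2) / 2) := by
  simp_rw [← ite_odd_pind_eq_neg_one_pow, sum_ite, sum_const, Int.not_odd_iff_even,
    Nat.Partition.distincts, filter_filter]
  simp only [oCount, eCount, distinctParts, Set.mem_ofPred_eq, Int.nsmul_eq_mul, mul_one,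
    mul_neg, sub_eq_add_neg]
  -- the two sides differ only in the `Decidable` instances of the filters
  rfl

/-- `Σ_n (-1)^{⌈n/2⌉}(o_D(n) - e_D(n)) q^n = (-q;-q²)_∞(q²;-q²)_∞`: for each `n`, the
coefficient of `q^n` of the left-hand side agrees with that of the truncated product
`Π_{j≤n} (1 + (-1)^j q^{2j+1})(1 - (-1)^j q^{2j+2})`. -/
theorem parity_gf_distinct :
    ∀ n : ℕ, PowerSeries.coeff n
        (PowerSeries.mk fun m =>
          (-1 : ℤ) ^ ((m + 1) / 2) *
            ((oCount distinctParts m : ℤ) - (eCount distinctParts m : ℤ)))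
      = PowerSeries.coeff n
          (∏ j ∈ range (n + 1),
            ((1 + (-1 : PowerSeries ℤ) ^ j * PowerSeries.X ^ (2 * j + 1)) *
              (1 - (-1 : PowerSeries ℤ) ^ j * PowerSeries.X ^ (2 * j + 2)))) := by
  intro n
  rw [coeff_mk, prod_range_pairs_eq_prod_Icc, coeff_prod_one_add_C_mul_X_pow,
    Nat.Partition.sum_filter_powerset_Icc_eq_sum_distincts (by omega : n ≤ 2 * (n + 1)),
    oCount_sub_eCount_distinctParts, mul_sum]
  exact sum_congr rfl fun p hp => (Nat.Partition.prod_neg_one_pow_div_two_eq hp).symm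
end

section
/- Let E(n) be the number of partitions of n into odd parts with an odd index minus the number of partitions of n into odd parts with an even index, where the index of λ ⊢ n has the parity of (op(λ) + (n mod 2))/2 − 1 and op(λ) is the number of (odd) parts of λ. Then Σ_{n≥0} (−1)^{⌈n/2⌉} E(n) q^n = Π_{n≥1} 1/(1 + (−1)^n q^{2n−1}). -/
/-!
For a partition `λ` of `k` into `m` odd parts, `k = 2 ∑ᵢ ⌊λᵢ/2⌋ + m`, so the sign `(-1)^⌈k/2⌉`
times the index sign `(-1)^(ind λ + 1)` collapses to `∏ᵢ (-1)^⌊λᵢ/2⌋`. The left-hand side is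
therefore the generating function of partitions into odd parts with the multiplicative weight
`(-1)^⌊j/2⌋` per part `j`, i.e. `∏_{m ≥ 1} ∑_c ((-1)^(m-1) q^(2m-1))^c`, a product of geometric
series inverse to the factors `1 + (-1)^m q^(2m-1)`. Modulo `q^(n+1)` only parts `≤ n` matter, so
the finite product over `m ≤ n + 1` already suffices.
-/

open Finset

/-- The set of partitions into odd parts. -/
def oddParts : Set (Multiset ℕ) := {s | ∀ x ∈ s, Odd x}

instance : DecidablePred (· ∈ oddParts) := fun s => by
  unfold oddParts; exact inferInstanceAs (Decidable (∀ x ∈ s, Odd x))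

/-- `E(n)` : the number of partitions of `n` into odd parts with odd index minus the number
of those with even index. -/
def Eind (n : ℕ) : ℤ := (oCount oddParts n : ℤ) - (eCount oddParts n : ℤ)

open PowerSeries
open PowerSeries.WithPiTopology

namespace Nat.Partition

variable {R : Type*} [CommSemiring R]

theorem trunc_genFun_congr {f g : ℕ → ℕ → R} {n : ℕ} (h : ∀ i < n, f i = g i) :
    trunc n (genFun f) = trunc n (genFun g) := by
  ext k
  simp only [coeff_trunc, coeff_genFun]
  split_ifs with hk
  · refine Finset.sum_congr rfl fun p _ => Finsupp.prod_congr fun i hi => ?_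
    rw [h i ((p.le_of_mem_parts (by simpa using hi)).trans_lt hk)]
  · rfl

variable [TopologicalSpace R] [T2Space R]

theorem genFun_eq_prod {f : ℕ → ℕ → R} {s : Finset ℕ} (hs : 0 ∉ s) (hf : ∀ i ∉ s, f i = 0) :
    genFun f = ∏ i ∈ s, (1 + ∑' j, f i (j + 1) • X ^ (i * (j + 1))) := by
  set F : ℕ → R⟦X⟧ := fun i => 1 + ∑' j, f i (j + 1) • X ^ (i * (j + 1))
  have hF : ∀ i ∉ s, F i = 1 := fun i hi => by simp [F, hf i hi]
  refine (hasProd_genFun f).unique ?_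
  rw [← Finset.prod_preimage (· + 1) s (add_left_injective 1).injOn F
    fun i hi hr => by
      cases i with
      | zero => exact absurd hi hs
      | succ i => exact absurd ⟨i, rfl⟩ hr]
  exact hasProd_prod_of_ne_finset_one fun i hi => hF (i + 1) (by simpa using hi)

theorem trunc_genFun_eq_trunc_prod {f : ℕ → ℕ → R} {s : Finset ℕ} {n : ℕ} (hs0 : 0 ∉ s)
    (hs : ∀ i < n, f i ≠ 0 → i ∈ s) :
    trunc n (genFun f) = trunc n (∏ i ∈ s, (1 + ∑' j, f i (j + 1) • X ^ (i * (j + 1)))) := by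
  rw [trunc_genFun_congr (g := fun i => if i ∈ s then f i else 0), genFun_eq_prod hs0]
  · exact congrArg _ (Finset.prod_congr rfl fun i hi => by simp only [if_pos hi])
  · exact fun i hi => if_neg hi
  · intro i hi
    split_ifs with his
    · rfl
    · by_contra h
      exact his (hs i hi h)

end Nat.Partition

theorem PowerSeries.one_add_tsum_pow_smul_X_pow_mul_one_sub {R : Type*} [CommRing R]
    [TopologicalSpace R] [IsTopologicalRing R] [T2Space R] (a : R) {i : ℕ} (hi : i ≠ 0) :
    (1 + ∑' j, a ^ (j + 1) • (X : R⟦X⟧) ^ (i * (j + 1))) * (1 - C a * X ^ i) = 1 := by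
  have hg : constantCoeff (C a * X ^ i : R⟦X⟧) = 0 := by simp [hi]
  have hterm : ∀ j, a ^ (j + 1) • (X : R⟦X⟧) ^ (i * (j + 1)) = (C a * X ^ i) ^ (j + 1) := by
    intro j
    rw [smul_eq_C_mul, mul_pow, pow_mul, map_pow]
  simp_rw [hterm]
  rw [← pow_zero (C a * X ^ i), ← tsum_eq_zero_add' ?_, pow_zero,
    tsum_pow_mul_one_sub_of_constantCoeff_eq_zero hg]
  simp_rw [pow_succ]
  exact (summable_pow_of_constantCoeff_eq_zero hg).mul_right _

def indexSign {n : ℕ} (p : n.Partition) : ℤ := if Odd (pind n p) then 1 else -1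

def oddPartWeight (i c : ℕ) : ℤ := if Odd i then ((-1) ^ (i / 2)) ^ c else 0

theorem toFinsupp_prod_oddPartWeight {k : ℕ} (p : k.Partition) :
    p.parts.toFinsupp.prod oddPartWeight =
      if p.parts ∈ oddParts then (-1) ^ (p.parts.map (fun i => i / 2)).sum else 0 := by
  simp only [Finsupp.prod, Multiset.toFinsupp_support, Multiset.toFinsupp_apply, oddPartWeight]
  split_ifs with hodd
  · rw [prod_congr rfl fun i hi => if_pos (hodd i (Multiset.mem_toFinset.mp hi)),
      sum_multiset_map_count, ← prod_pow_eq_pow_sum]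
    exact prod_congr rfl fun i _ => by rw [smul_eq_mul, ← pow_mul, mul_comm]
  · obtain ⟨i, hi, hieven⟩ : ∃ i ∈ p.parts, ¬ Odd i := by simpa [oddParts] using hodd
    exact prod_eq_zero (Multiset.mem_toFinset.mpr hi) (if_neg hieven)

theorem neg_one_pow_mul_ite_odd_eq_neg_one_pow {k m A : ℕ} (h : 2 * A + m = k) :
    (-1 : ℤ) ^ ((k + 1) / 2) * (if Odd (((m : ℤ) + ((k % 2 : ℕ) : ℤ)) / 2 - 1) then 1 else -1) =
      (-1) ^ A := by
  split_ifs with hodd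
  · rw [mul_one, neg_one_pow_eq_pow_mod_two, neg_one_pow_eq_pow_mod_two (n := A)]
    rw [Int.odd_iff] at hodd
    congr 1
    omega
  · rw [mul_neg_one, ← neg_one_mul, ← pow_succ', neg_one_pow_eq_pow_mod_two,
      neg_one_pow_eq_pow_mod_two (n := A)]
    rw [Int.not_odd_iff] at hodd
    congr 1
    omega

theorem neg_one_pow_mul_indexSign_of_mem_oddParts {k : ℕ} (p : k.Partition)
    (hp : p.parts ∈ oddParts) :
    (-1 : ℤ) ^ ((k + 1) / 2) * indexSign p =
      (-1) ^ (p.parts.map (fun i => i / 2)).sum := by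
  have hop : p.op = Multiset.card p.parts := by
    rw [Nat.Partition.op, Multiset.filter_eq_self.mpr hp]
  have hsum : 2 * (p.parts.map (fun i => i / 2)).sum + Multiset.card p.parts = k := by
    have hodd : p.parts.map (fun i => 2 * (i / 2) + 1) = p.parts := by
      conv_rhs => rw [← Multiset.map_id p.parts]
      exact Multiset.map_congr rfl fun i hi => Nat.two_mul_div_two_add_one_of_odd (hp i hi)
    conv_rhs => rw [← p.parts_sum, ← hodd]
    rw [Multiset.sum_map_add, Multiset.sum_map_mul_left, Multiset.map_const', Multiset.sum_replicate,
      smul_eq_mul, mul_one]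
  rw [indexSign, pind, hop]
  exact neg_one_pow_mul_ite_odd_eq_neg_one_pow hsum

theorem Eind_eq_sum (k : ℕ) :
    Eind k = ∑ p : k.Partition,
      if p.parts ∈ oddParts then indexSign p else 0 := by
  simp only [Eind, oCount, eCount, indexSign, card_filter, Nat.cast_sum, ← sum_sub_distrib]
  refine sum_congr rfl fun p _ => ?_
  by_cases hp : p.parts ∈ oddParts <;> by_cases ho : Odd (pind k p) <;>
    simp [hp, ho, Int.not_odd_iff_even.mp, Int.not_even_iff_odd]

theorem mk_neg_one_pow_mul_Eind_eq_genFun :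
    PowerSeries.mk (fun m => (-1 : ℤ) ^ ((m + 1) / 2) * Eind m) =
      Nat.Partition.genFun oddPartWeight := by
  ext k
  rw [coeff_mk, Nat.Partition.coeff_genFun, Eind_eq_sum, mul_sum]
  refine sum_congr rfl fun p _ => ?_
  rw [toFinsupp_prod_oddPartWeight]
  by_cases hp : p.parts ∈ oddParts
  · rw [if_pos hp, if_pos hp, neg_one_pow_mul_indexSign_of_mem_oddParts p hp]
  · rw [if_neg hp, if_neg hp, mul_zero]

/-- The identity is stated coefficientwise: for each `n`, the coefficient of `q^n` in the
left-hand side times the truncated product `∏_{1≤m≤n+1} (1 + (-1)^m q^{2m-1})` is that of `1`. -/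
theorem parity_gf_odd :
    ∀ n : ℕ, PowerSeries.coeff (R := ℤ) n
      ((PowerSeries.mk fun m => (-1 : ℤ) ^ ((m + 1) / 2) * Eind m) *
        ∏ j ∈ range (n + 1),
          (1 + (-1 : PowerSeries ℤ) ^ (j + 1) * PowerSeries.X ^ (2 * (j + 1) - 1)))
      = if n = 0 then 1 else 0 := by
  intro n
  set s := (range (n + 1)).image (fun j => 2 * j + 1)
  have hs0 : 0 ∉ s := by simp [s]
  have hs : ∀ i < n + 1, oddPartWeight i ≠ 0 → i ∈ s := by
    intro i hi hw
    obtain ⟨j, rfl⟩ : Odd i := by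
      by_contra h
      exact hw (funext fun c => if_neg h)
    exact mem_image.mpr ⟨j, mem_range.mpr (by omega), rfl⟩
  have hB : ∏ j ∈ range (n + 1), (1 + (-1 : ℤ⟦X⟧) ^ (j + 1) * X ^ (2 * (j + 1) - 1)) =
      ∏ i ∈ s, (1 - C ((-1 : ℤ) ^ (i / 2)) * X ^ i) := by
    rw [prod_image fun a _ b _ h => by omega]
    refine prod_congr rfl fun j _ => ?_
    rw [show 2 * (j + 1) - 1 = 2 * j + 1 by omega, show (2 * j + 1) / 2 = j by omega, pow_succ,
      map_pow, map_neg, map_one]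
    ring
  rw [mk_neg_one_pow_mul_Eind_eq_genFun, coeff_mul_eq_coeff_trunc_mul_trunc _ _ n.lt_succ_self,
    Nat.Partition.trunc_genFun_eq_trunc_prod hs0 hs,
    ← coeff_mul_eq_coeff_trunc_mul_trunc _ _ n.lt_succ_self, hB, ← prod_mul_distrib,
    prod_eq_one, coeff_one]
  intro i hi
  obtain ⟨j, -, rfl⟩ := mem_image.mp hi
  simp only [oddPartWeight, if_pos (odd_two_mul_add_one j)]
  exact one_add_tsum_pow_smul_X_pow_mul_one_sub _ (by omega)
end

section
/- If a partition λ of n has exactly n − 2k odd parts, then λ has at most k parts of size greater than 1, and the largest part of λ is at most 2k + 1. Consequently, for fixed k, the quantity c_n(k) = #{λ ⊢ n : op(λ) = n − 2k} is constant for all sufficiently large n (it stabilizes). -/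
open Finset

/-- The conjugated index `ind_{1^n}(λ) = (op(λ) + n)/2 - 1`. -/
def cind (n : ℕ) (p : n.Partition) : ℤ := ((p.op : ℤ) + (n : ℤ)) / 2 - 1

/-- `c_n(k)`: the number of partitions `λ` of `n` with `ind_{1^n}(λ) = n - k - 1`. -/
def cnk (n k : ℕ) : ℕ :=
  (univ.filter (fun p : n.Partition => cind n p = (n : ℤ) - k - 1)).card

/-!
Write `k(λ) = Σ ⌊x/2⌋` over the parts `x` of `λ`, so that `n = 2 k(λ) + op(λ)` and the condition
`op(λ) = n - 2k` says exactly `k(λ) = k`. A part `x > 1` contributes at least `1` to `k(λ)` and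
any part contributes `⌊x/2⌋ ≤ k(λ)`, which gives both bounds. Hence once `n > k(2k+1)` every such
partition contains a part `1`, and removing it is a bijection onto the partitions of `n - 1`
with the same `k(λ)`.
-/

namespace Multiset

theorem two_mul_sum_map_div_two_add_card_filter_odd_s12 (s : Multiset ℕ) :
    2 * (s.map (· / 2)).sum + (s.filter Odd).card = s.sum := by
  induction s using Multiset.induction with
  | empty => simp
  | cons a s ih =>
    have := Nat.div_add_mod a 2
    by_cases ha : Odd a
    · have := Nat.odd_iff.mp ha
      simp only [map_cons, sum_cons, ha, filter_cons_of_pos, card_cons]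
      omega
    · have := Nat.odd_iff.not.mp ha
      simp only [map_cons, sum_cons, ha, not_false_eq_true, filter_cons_of_neg]
      omega

theorem card_filter_one_lt_le_sum_map_div_two (s : Multiset ℕ) :
    (s.filter (1 < ·)).card ≤ (s.map (· / 2)).sum := by
  induction s using Multiset.induction with
  | empty => simp
  | cons a s ih =>
    by_cases ha : 1 < a
    · simp only [ha, filter_cons_of_pos, card_cons, map_cons, sum_cons]
      omega
    · simp only [ha, not_false_eq_true, filter_cons_of_neg, map_cons, sum_cons]
      omega

end Multiset

namespace Nat.Partition

variable {n : ℕ}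

/-- The paper's `k = Σ i (f_{2i} + f_{2i+1})`. -/
def sumHalves (p : n.Partition) : ℕ :=
  (p.parts.map (· / 2)).sum

theorem two_mul_sumHalves_add_op (p : n.Partition) : 2 * p.sumHalves + p.op = n := by
  rw [sumHalves, op, Multiset.two_mul_sum_map_div_two_add_card_filter_odd_s12, p.parts_sum]

theorem op_eq_iff_sumHalves_eq (p : n.Partition) (k : ℕ) :
    (p.op : ℤ) = n - 2 * k ↔ p.sumHalves = k := by
  have := p.two_mul_sumHalves_add_op
  omega

theorem card_filter_one_lt_parts_le_sumHalves (p : n.Partition) :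
    (p.parts.filter (1 < ·)).card ≤ p.sumHalves :=
  Multiset.card_filter_one_lt_le_sum_map_div_two p.parts

theorem le_two_mul_sumHalves_add_one (p : n.Partition) {x : ℕ} (hx : x ∈ p.parts) :
    x ≤ 2 * p.sumHalves + 1 := by
  have : x / 2 ≤ p.sumHalves := Multiset.le_sum_of_mem (Multiset.mem_map_of_mem (· / 2) hx)
  omega

theorem one_mem_parts_of_lt (p : n.Partition) (hn : p.sumHalves * (2 * p.sumHalves + 1) < n) :
    1 ∈ p.parts := by
  by_contra hone
  have hbig : p.parts.filter (1 < ·) = p.parts := by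
    refine Multiset.filter_eq_self.mpr fun x hx => ?_
    have := p.parts_pos hx
    have : x ≠ 1 := by rintro rfl; exact hone hx
    omega
  have hcard := p.card_filter_one_lt_parts_le_sumHalves
  rw [hbig] at hcard
  have : n ≤ p.sumHalves * (2 * p.sumHalves + 1) :=
    calc n = p.parts.sum := p.parts_sum.symm
      _ ≤ Multiset.card p.parts * (2 * p.sumHalves + 1) := by
        simpa using Multiset.sum_le_card_nsmul _ _ fun x hx => p.le_two_mul_sumHalves_add_one hx
      _ ≤ _ := Nat.mul_le_mul_right _ hcard
  omega

theorem sumHalves_cons_one (p : n.Partition) (q : (n + 1).Partition)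
    (h : q.parts = 1 ::ₘ p.parts) : q.sumHalves = p.sumHalves := by
  simp [sumHalves, h]

theorem card_filter_sumHalves_eq_succ {k : ℕ} (hn : k * (2 * k + 1) ≤ n) :
    #{q : (n + 1).Partition | q.sumHalves = k} = #{p : n.Partition | p.sumHalves = k} := by
  have hone : ∀ q ∈ ({q : (n + 1).Partition | q.sumHalves = k} : Finset _), 1 ∈ q.parts := by
    intro q hq
    rw [mem_filter] at hq
    exact q.one_mem_parts_of_lt (by rw [hq.2]; omega)
  let e := partitionWithPartEquiv (le_refl 1) (Nat.le_add_left 1 n)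
  refine card_bij' (fun q hq => e ⟨q, hone q hq⟩) (fun p _ => (e.symm p).1) ?_ ?_ ?_ ?_
  · intro q hq
    rw [mem_filter, ← (mem_filter.mp hq).2, sumHalves_cons_one (e ⟨q, hone q hq⟩) q]
    · exact ⟨mem_univ _, rfl⟩
    · exact (Multiset.cons_erase (hone q hq)).symm
  · intro p hp
    rw [mem_filter] at hp ⊢
    exact ⟨mem_univ _, (sumHalves_cons_one p _ rfl).trans hp.2⟩
  · exact fun q _ => congrArg Subtype.val (e.symm_apply_apply _)
  · exact fun p _ => e.apply_symm_apply p

end Nat.Partition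

/-- If a partition of `n` has exactly `n - 2k` odd parts, then it has at most `k` parts of
size greater than `1` and all its parts are at most `2k + 1`; consequently, for fixed `k`,
the quantity `#{λ ⊢ n : op(λ) = n - 2k}` is constant for all sufficiently large `n`. -/
theorem cnk_stabilizes (k : ℕ) :
    (∀ (n : ℕ) (p : n.Partition), (p.op : ℤ) = (n : ℤ) - 2 * k →
      (p.parts.filter (fun x => 1 < x)).card ≤ k ∧ ∀ x ∈ p.parts, x ≤ 2 * k + 1) ∧
    ∃ N C : ℕ, ∀ n ≥ N,
      (univ.filter (fun p : n.Partition => (p.op : ℤ) = (n : ℤ) - 2 * k)).card = C := by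
  simp only [Nat.Partition.op_eq_iff_sumHalves_eq]
  refine ⟨fun n p hp => hp ▸ ⟨p.card_filter_one_lt_parts_le_sumHalves,
      fun x hx => p.le_two_mul_sumHalves_add_one hx⟩,
    k * (2 * k + 1), #{p : (k * (2 * k + 1)).Partition | p.sumHalves = k}, fun n hn => ?_⟩
  induction n, hn using Nat.le_induction with
  | base => rfl
  | succ n hn ih => rw [Nat.Partition.card_filter_sumHalves_eq_succ hn, ih]
end

section
/- Define c̃_n(k) = #{λ ⊢ n : λ has no parts equal to 1 and Σ_{i≥1} i(f_{2i} + f_{2i+1}) = k}, where f_i is the multiplicity of part i in λ. Then Σ_{k,n≥0} c̃_n(k) t^k q^n = 1/((tq²; tq²)_∞ (tq³; tq²)_∞). -/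
/-!
The weight `Σ_i i (f_{2i} + f_{2i+1})` of a partition is `Σ_{parts c} ⌊c/2⌋`, which is additive
over the parts. Hence `Ctgen` is the partition generating function with character
`(i, c) ↦ t^{⌊i/2⌋ c}` on parts `i ≥ 2`, and the product formula `Nat.Partition.hasProd_genFun`
turns it into `Π_{i≥2} 1/(1 - t^{⌊i/2⌋} q^i)`; grouping `i = 2j+2, 2j+3` gives the two
`q`-Pochhammer symbols. The coefficient of `q^n` only sees parts `i ≤ n`, so all products can be
kept finite.
-/

open Finset

/-- `c̃_n(k)`: the number of partitions `λ` of `n` with no part equal to `1` and with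
`Σ_{i≥1} i (f_{2i} + f_{2i+1}) = k`, where `f_i` is the multiplicity of the part `i`
(parts of `λ` are at most `n`, so only `1 ≤ i ≤ n` can contribute). -/
def ctilde (n k : ℕ) : ℕ :=
  (univ.filter (fun p : n.Partition =>
    1 ∉ p.parts ∧
      ∑ i ∈ Finset.Icc 1 n, i * (p.parts.count (2 * i) + p.parts.count (2 * i + 1)) = k)).card

/-- The double generating function `Σ_{k,n} c̃_n(k) t^k q^n`, as a power series in `q` whose
coefficient of `q^n` is the polynomial `Σ_k c̃_n(k) t^k` (note `c̃_n(k) = 0` for `k > n`). -/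
noncomputable def Ctgen : PowerSeries (Polynomial ℤ) :=
  PowerSeries.mk fun n =>
    ∑ k ∈ range (n + 1), (ctilde n k : ℤ) • (Polynomial.X : Polynomial ℤ) ^ k

open PowerSeries

namespace Nat.Partition

open PowerSeries.WithPiTopology in
theorem genFun_mul_prod_one_sub_eq_one {R : Type*} [CommRing R] (a : ℕ → R) {s : Finset ℕ}
    (hs : 0 ∉ s) :
    genFun (fun i c => if i ∈ s then a i ^ c else 0) * ∏ i ∈ s, (1 - C (a i) * X ^ i) = 1 := by
  -- the statement is algebraic; the discrete topology on `R` gives access to `hasProd_genFun`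
  let _ : TopologicalSpace R := ⊥
  have _ : DiscreteTopology R := ⟨rfl⟩
  set f : ℕ → ℕ → R := fun i c => if i ∈ s then a i ^ c else 0
  have hprod : genFun f = ∏ i ∈ s.preimage (· + 1) (by simp),
      (1 + ∑' j, f (i + 1) (j + 1) • (X : R⟦X⟧) ^ ((i + 1) * (j + 1))) :=
    (hasProd_genFun f).unique (hasProd_prod_of_ne_finset_one fun i hi => by simp_all [f])
  have hgeom : ∀ i ∈ s,
      (1 + ∑' j, f i (j + 1) • (X : R⟦X⟧) ^ (i * (j + 1))) * (1 - C (a i) * X ^ i) = 1 := by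
    intro i hi
    have h0 : constantCoeff (C (a i) * X ^ i) = 0 := by simp [ne_of_mem_of_not_mem hi hs]
    have hpow (j : ℕ) : f i j • (X : R⟦X⟧) ^ (i * j) = (C (a i) * X ^ i) ^ j := by
      simp [f, hi, smul_eq_C_mul, mul_pow, pow_mul]
    simp_rw [hpow]
    have geom := tsum_pow_mul_one_sub_of_constantCoeff_eq_zero h0
    rwa [(summable_pow_of_constantCoeff_eq_zero h0).tsum_eq_zero_add,
      pow_zero] at geom
  rw [hprod, prod_preimage (· + 1) s _
      (fun i => 1 + ∑' j, f i (j + 1) • (X : R⟦X⟧) ^ (i * (j + 1))) fun i hi hr => ?_,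
    ← prod_mul_distrib, prod_eq_one hgeom]
  obtain ⟨k, rfl⟩ := Nat.exists_eq_add_one_of_ne_zero (ne_of_mem_of_not_mem hi hs)
  exact absurd ⟨k, rfl⟩ hr

end Nat.Partition

theorem sum_Icc_mul_count_add_count_eq_sum_map_div_two {n : ℕ} {M : Multiset ℕ}
    (hM : ∀ j ∈ M, j ≤ 2 * n + 1) :
    ∑ i ∈ Icc 1 n, i * (M.count (2 * i) + M.count (2 * i + 1)) = (M.map (· / 2)).sum := by
  induction M using Multiset.induction with
  | empty => simp
  | cons a M ih =>
    have hcons (i : ℕ) : i * ((a ::ₘ M).count (2 * i) + (a ::ₘ M).count (2 * i + 1)) =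
        i * (M.count (2 * i) + M.count (2 * i + 1)) + if a / 2 = i then a / 2 else 0 := by
      rw [Multiset.count_cons, Multiset.count_cons, add_add_add_comm, mul_add]
      congr 1
      split_ifs <;> simp <;> omega
    have ha : a / 2 ∈ Icc 1 n ∨ a / 2 = 0 := by
      have := hM a (Multiset.mem_cons_self a M)
      rw [mem_Icc]
      omega
    rw [sum_congr rfl fun i _ => hcons i, sum_add_distrib, sum_ite_eq,
      ih fun j hj => hM j (Multiset.mem_cons_of_mem hj), Multiset.map_cons, Multiset.sum_cons,
      add_comm]
    rcases ha with ha | ha <;> simp [ha]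

theorem coeff_Ctgen (n : ℕ) :
    coeff n Ctgen =
      ∑ p : n.Partition with 1 ∉ p.parts, Polynomial.X ^ (p.parts.map (· / 2)).sum := by
  have hweight (p : n.Partition) :
      ∑ i ∈ Icc 1 n, i * (p.parts.count (2 * i) + p.parts.count (2 * i + 1)) =
        (p.parts.map (· / 2)).sum :=
    sum_Icc_mul_count_add_count_eq_sum_map_div_two fun j hj =>
      (Nat.Partition.le_of_mem_parts hj).trans (by omega)
  have hbound (p : n.Partition) : (p.parts.map (· / 2)).sum ∈ range (n + 1) := by
    rw [mem_range, Nat.lt_succ_iff]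
    calc (p.parts.map (· / 2)).sum ≤ (p.parts.map id).sum :=
          Multiset.sum_map_le_sum_map _ _ fun j _ => Nat.div_le_self j 2
      _ = n := by rw [Multiset.map_id, p.parts_sum]
  rw [Ctgen, coeff_mk, ← sum_fiberwise_of_maps_to fun p _ => hbound p]
  refine sum_congr rfl fun k _ => ?_
  rw [sum_congr rfl fun p hp => by rw [(mem_filter.1 hp).2], sum_const, filter_filter, ctilde,
    natCast_zsmul]
  simp only [hweight]

theorem coeff_Ctgen_eq_coeff_genFun {m N : ℕ} (hm : m ≤ N) :
    coeff m Ctgen = coeff m (Nat.Partition.genFun fun i c =>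
      if i ∈ Icc 2 N then ((Polynomial.X : Polynomial ℤ) ^ (i / 2)) ^ c else 0) := by
  rw [coeff_Ctgen, Nat.Partition.coeff_genFun, sum_filter]
  refine sum_congr rfl fun p _ => ?_
  rw [Finsupp.prod, Multiset.toFinsupp_support]
  simp only [Multiset.toFinsupp_apply]
  split_ifs with h1
  · exact (prod_eq_zero (Multiset.mem_toFinset.2 h1) (by simp)).symm
  · have hparts (i : ℕ) (hi : i ∈ p.parts.toFinset) : i ∈ Icc 2 N := by
      rw [Multiset.mem_toFinset] at hi
      have := p.parts_pos hi
      have := Nat.Partition.le_of_mem_parts hi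
      have := ne_of_mem_of_not_mem hi h1
      rw [mem_Icc]
      omega
    rw [prod_congr rfl fun i hi => if_pos (hparts i hi), sum_multiset_map_count,
      ← prod_pow_eq_pow_sum]
    refine prod_congr rfl fun i _ => ?_
    rw [smul_eq_mul, mul_comm, pow_mul]

theorem prod_Icc_two_eq_prod_range_pairs {M : Type*} [CommMonoid M] (f : ℕ → M) (m : ℕ) :
    ∏ i ∈ Icc 2 (2 * m + 1), f i = ∏ j ∈ range m, f (2 * j + 2) * f (2 * j + 3) := by
  induction m with
  | zero => simp
  | succ m ih =>
    have hIcc : Icc 2 (2 * (m + 1) + 1) =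
        insert (2 * m + 3) (insert (2 * m + 2) (Icc 2 (2 * m + 1))) := by
      ext x
      simp only [mem_Icc, mem_insert]
      omega
    rw [prod_range_succ, ← ih, hIcc, prod_insert (by simp), prod_insert (by simp)]
    ac_rfl

/-- The identity `Ctgen · (tq²;tq²)_∞ (tq³;tq²)_∞ = 1`, read coefficientwise: the factors with
`j > n` do not change the coefficient of `q^n`. -/
theorem Ctgen_eq :
    ∀ n : ℕ, PowerSeries.coeff (R := Polynomial ℤ) n
      (Ctgen * ∏ j ∈ range (n + 1),
        ((1 - PowerSeries.C (R := Polynomial ℤ) (Polynomial.X ^ (j + 1)) *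
            PowerSeries.X ^ (2 * j + 2)) *
          (1 - PowerSeries.C (R := Polynomial ℤ) (Polynomial.X ^ (j + 1)) *
            PowerSeries.X ^ (2 * j + 3)))) = if n = 0 then 1 else 0 := by
  intro n
  set s := Icc 2 (2 * (n + 1) + 1)
  set G := Nat.Partition.genFun fun i c =>
    if i ∈ s then ((Polynomial.X : Polynomial ℤ) ^ (i / 2)) ^ c else 0
  have htrunc : trunc (n + 1) Ctgen = trunc (n + 1) G := by
    ext m : 1
    simp only [coeff_trunc]
    split_ifs with hm
    · exact coeff_Ctgen_eq_coeff_genFun (by omega)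
    · rfl
  have hprod : ∏ j ∈ range (n + 1),
      ((1 - C (Polynomial.X ^ (j + 1)) * X ^ (2 * j + 2)) *
        (1 - C (Polynomial.X ^ (j + 1)) * X ^ (2 * j + 3))) =
      ∏ i ∈ s, (1 - C ((Polynomial.X : Polynomial ℤ) ^ (i / 2)) * X ^ i) := by
    rw [prod_Icc_two_eq_prod_range_pairs]
    refine prod_congr rfl fun j _ => ?_
    rw [show (2 * j + 2) / 2 = j + 1 by omega, show (2 * j + 3) / 2 = j + 1 by omega]
  rw [coeff_mul_eq_coeff_trunc_mul_trunc _ _ n.lt_succ_self, htrunc,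
    ← coeff_mul_eq_coeff_trunc_mul_trunc _ _ n.lt_succ_self, hprod,
    Nat.Partition.genFun_mul_prod_one_sub_eq_one _ (by simp [s]), coeff_one]
end

section
/- Let c(k) be the number of partitions λ (of any size) with no part equal to 1 such that Σ_{i≥1} i(f_{2i} + f_{2i+1}) = k, where f_i is the multiplicity of part i. Then Σ_{k≥0} c(k) x^k = 1/(x; x)_∞², i.e. c(k) equals the number of two-colored partitions of k. -/
open Finset

/-- `c(k)`: the number of partitions (of any weight) with no part equal to `1` such that
`Σ_{i≥1} i (f_{2i} + f_{2i+1}) = k`; it is the (finitely supported) sum `Σ_n c̃_n(k)`. -/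
noncomputable def cc (k : ℕ) : ℕ := ∑' n : ℕ, ctilde n k

/-!
Sort the parts of a partition without parts `1` into even parts `2x` and odd parts `2x + 1`, and
halve them (rounding down). This is a bijection onto pairs `(μ, ν)` of partitions, under which
`Σ_i i (f_{2i} + f_{2i+1}) = Σ_j ⌊j / 2⌋` becomes `|μ| + |ν|`; hence `c(k) = Σ_{a+b=k} p(a) p(b)`.
Since `(Σ_n p(n) xⁿ) · Π_{i<N} (1 - x^{i+1}) ≡ 1 mod x^{N+1}`, the claim follows.
-/

namespace Multiset

def evenHalves (s : Multiset ℕ) : Multiset ℕ := (s.filter Even).map (· / 2)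

def oddHalves (s : Multiset ℕ) : Multiset ℕ := (s.filter (¬Even ·)).map (· / 2)

def ofHalves (μ ν : Multiset ℕ) : Multiset ℕ := μ.map (2 * ·) + ν.map (2 * · + 1)

theorem evenHalves_add_oddHalves (s : Multiset ℕ) :
    evenHalves s + oddHalves s = s.map (· / 2) := by
  rw [evenHalves, oddHalves, ← map_add, filter_add_not]

theorem ofHalves_evenHalves_oddHalves (s : Multiset ℕ) :
    ofHalves (evenHalves s) (oddHalves s) = s := by
  rw [ofHalves, evenHalves, oddHalves, map_map, map_map]
  conv_rhs => rw [← filter_add_not Even s]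
  congr 1 <;> refine (map_congr rfl fun j hj => ?_).trans (map_id _) <;>
    grind [(mem_filter.1 hj).2]

theorem evenHalves_ofHalves (μ ν : Multiset ℕ) : evenHalves (ofHalves μ ν) = μ := by
  rw [evenHalves, ofHalves, filter_add, filter_eq_self.2, filter_eq_nil.2, add_zero, map_map]
  · exact (map_congr rfl fun x _ => by grind).trans (map_id _)
  · simp
  · simp

theorem oddHalves_ofHalves (μ ν : Multiset ℕ) : oddHalves (ofHalves μ ν) = ν := by
  rw [oddHalves, ofHalves, filter_add, filter_eq_nil.2, filter_eq_self.2, zero_add, map_map]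
  · exact (map_congr rfl fun x _ => by grind).trans (map_id _)
  · simp
  · simp

theorem map_div_two_ofHalves (μ ν : Multiset ℕ) : (ofHalves μ ν).map (· / 2) = μ + ν := by
  rw [← evenHalves_add_oddHalves, evenHalves_ofHalves, oddHalves_ofHalves]

theorem two_le_of_mem_ofHalves {μ ν : Multiset ℕ} (hμ : 0 ∉ μ) (hν : 0 ∉ ν) :
    ∀ j ∈ ofHalves μ ν, 2 ≤ j := by
  simp only [ofHalves, mem_add, mem_map]
  rintro _ (⟨x, hx, rfl⟩ | ⟨x, hx, rfl⟩) <;> grind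

theorem zero_notMem_evenHalves {s : Multiset ℕ} (h : ∀ j ∈ s, 2 ≤ j) : 0 ∉ evenHalves s := by
  simp only [evenHalves, mem_map, mem_filter]
  grind

theorem zero_notMem_oddHalves {s : Multiset ℕ} (h : ∀ j ∈ s, 2 ≤ j) : 0 ∉ oddHalves s := by
  simp only [oddHalves, mem_map, mem_filter]
  grind

theorem sum_le_three_mul_sum_map_div_two {s : Multiset ℕ} (h : ∀ j ∈ s, 2 ≤ j) :
    s.sum ≤ 3 * (s.map (· / 2)).sum := by
  rw [← sum_map_mul_left]
  simpa using sum_map_le_sum_map id _ fun j hj => show j ≤ 3 * (j / 2) by grind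

theorem sum_Icc_mul_count_eq_sum_map_div_two (n : ℕ) {s : Multiset ℕ} (h : ∀ j ∈ s, j / 2 ≤ n) :
    ∑ i ∈ Finset.Icc 1 n, i * (s.count (2 * i) + s.count (2 * i + 1)) = (s.map (· / 2)).sum := by
  induction s using Multiset.induction_on with
  | empty => simp
  | cons j s ih =>
    have hj : ∑ i ∈ Finset.Icc 1 n,
        i * ((if 2 * i = j then 1 else 0) + if 2 * i + 1 = j then 1 else 0) = j / 2 := by
      rw [Finset.sum_eq_single (j / 2)] <;> grind
    simp only [count_cons, map_cons, sum_cons]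
    rw [← ih fun x hx => h x (mem_cons_of_mem hx), ← hj, add_comm, ← Finset.sum_add_distrib]
    exact Finset.sum_congr rfl fun i _ => by ring

end Multiset

namespace Nat.Partition

theorem parts_ofMultiset_of_zero_notMem {s : Multiset ℕ} (h : 0 ∉ s) :
    (ofMultiset s).parts = s :=
  (ofMultiset_parts s).trans (Multiset.filter_eq_self.2 fun _ ha => ne_of_mem_of_not_mem ha h)

theorem zero_notMem_parts {n : ℕ} (p : n.Partition) : 0 ∉ p.parts :=
  fun h => (p.parts_pos h).false

theorem sigma_ext {x y : Σ n : ℕ, n.Partition} (h : x.2.parts = y.2.parts) : x = y := by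
  obtain ⟨n, p⟩ := x
  obtain ⟨m, q⟩ := y
  obtain rfl : n = m := by rw [← p.parts_sum, ← q.parts_sum, h]
  exact congrArg _ (Nat.Partition.ext h)

theorem sigma_pair_ext {x y : Σ ab : ℕ × ℕ, ab.1.Partition × ab.2.Partition}
    (h₁ : x.2.1.parts = y.2.1.parts) (h₂ : x.2.2.parts = y.2.2.parts) : x = y := by
  obtain ⟨⟨a, b⟩, μ, ν⟩ := x
  obtain ⟨⟨c, d⟩, μ', ν'⟩ := y
  dsimp only at h₁ h₂
  obtain rfl : a = c := μ.parts_sum.symm.trans (h₁ ▸ μ'.parts_sum)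
  obtain rfl : b = d := ν.parts_sum.symm.trans (h₂ ▸ ν'.parts_sum)
  rw [Nat.Partition.ext h₁, Nat.Partition.ext h₂]

theorem two_le_of_one_notMem {n : ℕ} {p : n.Partition} (h : 1 ∉ p.parts) :
    ∀ j ∈ p.parts, 2 ≤ j := fun j hj => by
  have := p.parts_pos hj
  grind

open Multiset

theorem sum_Icc_mul_count_parts {n : ℕ} (p : n.Partition) :
    ∑ i ∈ Finset.Icc 1 n, i * (p.parts.count (2 * i) + p.parts.count (2 * i + 1)) =
      (p.parts.map (· / 2)).sum :=
  sum_Icc_mul_count_eq_sum_map_div_two n fun j hj =>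
    (Nat.div_le_self j 2).trans (le_of_mem_parts hj)

def splitHalves (x : Σ n : ℕ, n.Partition) : Σ ab : ℕ × ℕ, ab.1.Partition × ab.2.Partition :=
  ⟨((evenHalves x.2.parts).sum, (oddHalves x.2.parts).sum),
    ofMultiset (evenHalves x.2.parts), ofMultiset (oddHalves x.2.parts)⟩

def joinHalves (y : Σ ab : ℕ × ℕ, ab.1.Partition × ab.2.Partition) : Σ n : ℕ, n.Partition :=
  ⟨_, ofMultiset (ofHalves y.2.1.parts y.2.2.parts)⟩

end Nat.Partition

open Nat.Partition Multiset in
theorem ctilde_eq_zero_of_lt {n k : ℕ} (h : 3 * k < n) : ctilde n k = 0 := by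
  rw [ctilde, Finset.card_eq_zero, Finset.filter_eq_empty_iff]
  rintro p - ⟨h1, hk⟩
  have := sum_le_three_mul_sum_map_div_two (two_le_of_one_notMem h1)
  rw [p.parts_sum, ← sum_Icc_mul_count_parts, hk] at this
  omega

open Nat.Partition Multiset in
theorem sum_range_ctilde (k : ℕ) : ∑ n ∈ Finset.range (3 * k + 1), ctilde n k =
    ∑ ab ∈ antidiagonal k, Fintype.card ab.1.Partition * Fintype.card ab.2.Partition := by
  simp only [ctilde, ← Finset.card_univ, ← Finset.card_product, Finset.univ_product_univ,
    ← Finset.card_sigma]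
  refine Finset.card_nbij' splitHalves joinHalves ?_ ?_ ?_ ?_
  · rintro ⟨n, p⟩ hp
    simp only [Finset.mem_coe, Finset.mem_sigma, Finset.mem_filter, Finset.mem_univ,
      true_and] at hp ⊢
    refine ⟨?_, trivial⟩
    rw [Finset.HasAntidiagonal.mem_antidiagonal, splitHalves, ← Multiset.sum_add,
      evenHalves_add_oddHalves, ← sum_Icc_mul_count_parts, hp.2.2]
  · rintro ⟨⟨a, b⟩, μ, ν⟩ hy
    simp only [Finset.mem_coe, Finset.mem_sigma, Finset.HasAntidiagonal.mem_antidiagonal] at hy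
    have hs := two_le_of_mem_ofHalves μ.zero_notMem_parts ν.zero_notMem_parts
    have hk : ((ofHalves μ.parts ν.parts).map (· / 2)).sum = k := by
      rw [map_div_two_ofHalves, Multiset.sum_add, μ.parts_sum, ν.parts_sum, hy.1]
    simp only [joinHalves, Finset.mem_coe, Finset.mem_sigma, Finset.mem_filter, Finset.mem_univ,
      true_and, Finset.mem_range, Nat.lt_succ_iff, sum_Icc_mul_count_parts,
      parts_ofMultiset_of_zero_notMem fun h => absurd (hs 0 h) (by norm_num)]
    exact ⟨hk ▸ sum_le_three_mul_sum_map_div_two hs, fun h => absurd (hs 1 h) (by norm_num), hk⟩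
  · rintro ⟨n, p⟩ hp
    simp only [Finset.mem_coe, Finset.mem_sigma, Finset.mem_filter, Finset.mem_univ,
      true_and] at hp
    have h2 := two_le_of_one_notMem hp.2.1
    have he := parts_ofMultiset_of_zero_notMem (zero_notMem_evenHalves h2)
    have ho := parts_ofMultiset_of_zero_notMem (zero_notMem_oddHalves h2)
    refine sigma_ext (parts_ofMultiset_of_zero_notMem ?_ |>.trans ?_) <;>
      simp only [splitHalves, he, ho, ofHalves_evenHalves_oddHalves, p.zero_notMem_parts,
        not_false_eq_true]
  · rintro ⟨⟨a, b⟩, μ, ν⟩ -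
    have ht := parts_ofMultiset_of_zero_notMem fun h => absurd
      (two_le_of_mem_ofHalves μ.zero_notMem_parts ν.zero_notMem_parts 0 h) (by norm_num)
    refine sigma_pair_ext (parts_ofMultiset_of_zero_notMem ?_ |>.trans ?_)
      (parts_ofMultiset_of_zero_notMem ?_ |>.trans ?_) <;>
      simp only [joinHalves, ht, evenHalves_ofHalves, oddHalves_ofHalves, μ.zero_notMem_parts,
        ν.zero_notMem_parts, not_false_eq_true]

theorem cc_eq_sum_antidiagonal (k : ℕ) :
    cc k = ∑ ab ∈ antidiagonal k, Fintype.card ab.1.Partition * Fintype.card ab.2.Partition := by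
  rw [cc, tsum_eq_sum (s := range (3 * k + 1)) fun n hn =>
    ctilde_eq_zero_of_lt (by simpa using hn), sum_range_ctilde]

open PowerSeries PowerSeries.WithPiTopology

namespace Nat.Partition

theorem restricted_le_eq_univ {n N : ℕ} (h : n ≤ N) : restricted n (· ≤ N) = univ :=
  filter_true_of_mem fun _ _ _ hi => (le_of_mem_parts hi).trans h

theorem powerSeriesMk_card_restricted_le_mul_prod (R : Type*) [CommRing R] (N : ℕ) :
    PowerSeries.mk (fun n ↦ (#(restricted n (· ≤ N)) : R)) *
      ∏ i ∈ range N, (1 - X ^ (i + 1)) = 1 := by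
  -- the discrete topology only serves to phrase the infinite-product generating function
  let _ : TopologicalSpace R := ⊥
  have _ : DiscreteTopology R := ⟨rfl⟩
  have h := hasProd_powerSeriesMk_card_restricted R (· ≤ N)
  rw [h.unique (hasProd_prod_of_ne_finset_one (s := range N) fun i hi =>
    if_neg (mt mem_range.2 hi)), ← prod_mul_distrib]
  refine prod_eq_one fun i hi => ?_
  simp_rw [if_pos (show i + 1 ≤ N from mem_range.1 hi), pow_mul]
  exact tsum_pow_mul_one_sub_of_constantCoeff_eq_zero (by simp)

theorem trunc_powerSeriesMk_card_mul_prod (R : Type*) [CommRing R] (N : ℕ) :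
    trunc (N + 1) (PowerSeries.mk (fun n ↦ (Fintype.card n.Partition : R)) *
      ∏ i ∈ range N, (1 - X ^ (i + 1))) = 1 := by
  have h : trunc (N + 1) (PowerSeries.mk fun n ↦ (Fintype.card n.Partition : R)) =
      trunc (N + 1) (PowerSeries.mk fun n ↦ (#(restricted n (· ≤ N)) : R)) := by
    ext n
    simp only [coeff_trunc, coeff_mk]
    split_ifs with hn
    · rw [restricted_le_eq_univ (by omega), Finset.card_univ]
    · rfl
  rw [← trunc_trunc_mul, h, trunc_trunc_mul, powerSeriesMk_card_restricted_le_mul_prod, trunc_one]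

end Nat.Partition

/-- `Σ_k c(k) x^k = 1/(x;x)_∞²`: for each `m`, the coefficient of `x^m` in
`(Σ_k c(k) x^k) · Π_{j≤m} (1 - x^{j+1})²` is `1` if `m = 0` and `0` otherwise, i.e. `c(k)`
counts two-colored partitions of `k`. -/
theorem c_gf :
    ∀ m : ℕ, PowerSeries.coeff (R := ℤ) m
      ((PowerSeries.mk fun k => (cc k : ℤ)) *
        ∏ j ∈ range (m + 1), (1 - PowerSeries.X ^ (j + 1)) ^ 2)
      = if m = 0 then 1 else 0 := by
  intro m
  set P : ℤ⟦X⟧ := PowerSeries.mk fun n ↦ (Fintype.card n.Partition : ℤ)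
  have hcc : PowerSeries.mk (fun k => (cc k : ℤ)) = P ^ 2 := by
    ext k
    simp [P, sq, coeff_mul, cc_eq_sum_antidiagonal]
  set Q : ℤ⟦X⟧ := ∏ j ∈ range (m + 1), (1 - X ^ (j + 1))
  rw [hcc, prod_pow, ← mul_pow]
  calc _ = (trunc (m + 2) ((P * Q) ^ 2)).coeff m := by rw [coeff_trunc, if_pos (by omega)]
    _ = _ := by
      rw [← trunc_trunc_pow, Nat.Partition.trunc_powerSeriesMk_card_mul_prod]
      simp [Polynomial.coeff_one]
end
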